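/- arXiv:1010.0299 — 4 statements merged into one kernel-verified Lean document; each statement's English description precedes it below -/
import Mathlib

section
/- Let f_1 and f_2 be entire functions, φ(z) = az + b an affine map with a ≠ 0 such that f_2 = φ^{-1} ∘ f_1 ∘ φ on ℂ. Let L_1 be a linearizer of f_1 at a repelling fixed point z_1 and L_2 a linearizer of f_2 at z_2 = φ^{-1}(z_1) with L_1'(0) = L_2'(0). Then L_2(z) = φ^{-1}(L_1(az)) for all z ∈ ℂ. -/
/-!
The map `z ↦ φ⁻¹(L₁(a z))` is again a linearizer of `f₂` at `φ⁻¹(z₁)`, with the same multiplier and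
the same derivative at `0` as `L₂`, so it suffices that a linearizer `L` of `f` at a repelling fixed
point is determined by `L'(0)`. If `L ≠ M` are two such, `g = L - M` vanishes to some finite order
`n ≥ 2` at `0`. Then `g(μ z) / g(z) → μ ^ n` as `z → 0`, while `g(μ z) = f(L z) - f(M z)` forces
the same ratio to tend to `f'(z₀) = μ`; but `μ ^ n = μ` is impossible for `|μ| > 1`.
-/

open Filter Topology

theorem HasStrictDerivAt.tendsto_sub_div_sub {𝕜 α : Type*} [NontriviallyNormedField 𝕜]
    {f : 𝕜 → 𝕜} {f' x : 𝕜} (hf : HasStrictDerivAt f f' x) {l : Filter α} {u v : α → 𝕜}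
    (hu : Tendsto u l (𝓝 x)) (hv : Tendsto v l (𝓝 x)) (huv : ∀ᶠ t in l, u t ≠ v t) :
    Tendsto (fun t ↦ (f (u t) - f (v t)) / (u t - v t)) l (𝓝 f') := by
  have hlo := (hf.isLittleO.comp_tendsto (hu.prodMk_nhds hv)).tendsto_div_nhds_zero
  rw [← zero_add f']
  refine (hlo.add_const f').congr' ?_
  filter_upwards [huv] with t ht
  simp only [Function.comp_apply, ContinuousLinearMap.toSpanSingleton_apply, smul_eq_mul]
  field_simp [sub_ne_zero.mpr ht]
  ring

theorem AnalyticAt.tendsto_comp_mul_div_of_analyticOrderAt_eq {𝕜 : Type*}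
    [NontriviallyNormedField 𝕜] {g : 𝕜 → 𝕜} {n : ℕ} (hg : AnalyticAt 𝕜 g 0)
    (hn : analyticOrderAt g 0 = n) (c : 𝕜) :
    Tendsto (fun z ↦ g (c * z) / g z) (𝓝[≠] 0) (𝓝 (c ^ n)) := by
  obtain ⟨h, hh, hh0, hgh⟩ := hg.analyticOrderAt_eq_natCast.mp hn
  simp only [sub_zero, smul_eq_mul] at hgh
  have hc : Tendsto (c * ·) (𝓝 0) (𝓝 0) := by
    simpa using (continuous_const_mul c).tendsto 0
  have hlim : Tendsto (fun z ↦ c ^ n * h (c * z) / h z) (𝓝 0) (𝓝 (c ^ n)) := by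
    simpa [hh0, Pi.div_def] using
      (tendsto_const_nhds.mul (hh.continuousAt.tendsto.comp hc)).div hh.continuousAt.tendsto hh0
  refine (hlim.mono_left nhdsWithin_le_nhds).congr' ?_
  filter_upwards [nhdsWithin_le_nhds (hh.continuousAt.eventually_ne hh0),
    nhdsWithin_le_nhds (hc.eventually hgh), nhdsWithin_le_nhds hgh, self_mem_nhdsWithin]
    with z hhz hgcz hgz hz
  rw [hgcz, hgz, mul_pow]
  field_simp [pow_ne_zero n (show z ≠ 0 from hz)]

structure IsLinearizer (f : ℂ → ℂ) (z₀ μ : ℂ) (L : ℂ → ℂ) : Prop where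
  differentiable : Differentiable ℂ L
  map_zero : L 0 = z₀
  semiconj : ∀ z, f (L z) = L (μ * z)

theorem IsLinearizer.eq_of_deriv_eq {f L M : ℂ → ℂ} {z₀ μ : ℂ} (hf : HasStrictDerivAt f μ z₀)
    (hμ : 1 < ‖μ‖) (hL : IsLinearizer f z₀ μ L) (hM : IsLinearizer f z₀ μ M)
    (hderiv : deriv L 0 = deriv M 0) : L = M := by
  have hLa := Complex.analyticOnNhd_univ_iff_differentiable.mpr hL.differentiable
  have hMa := Complex.analyticOnNhd_univ_iff_differentiable.mpr hM.differentiable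
  by_contra hne
  have hfreq : ¬ ∃ᶠ z in 𝓝[≠] 0, L z = M z := fun h ↦ hne (hLa.eq_of_frequently_eq hMa h)
  set g := fun z ↦ L z - M z
  have hg : AnalyticAt ℂ g 0 := (hLa 0 trivial).sub (hMa 0 trivial)
  have hg_ne : ∀ᶠ z in 𝓝[≠] 0, L z ≠ M z := by simpa using hfreq
  obtain ⟨n, hn⟩ : ∃ n : ℕ, analyticOrderAt g 0 = n := by
    refine (ENat.ne_top_iff_exists.mp fun htop ↦ hfreq ?_).imp fun _ ↦ Eq.symm
    exact ((analyticOrderAt_eq_top.mp htop).filter_mono nhdsWithin_le_nhds).frequently.mono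
      fun z hz ↦ sub_eq_zero.mp hz
  have h2 : 2 ≤ n := by
    have := (natCast_le_analyticOrderAt_iff_iteratedDeriv_eq_zero hg (n := 2)).mpr ?_
    · exact_mod_cast hn ▸ this
    intro i hi
    interval_cases i
    · simp [g, hL.map_zero, hM.map_zero]
    · simp [g, deriv_fun_sub (hL.differentiable 0) (hM.differentiable 0), hderiv]
  have hratio : Tendsto (fun z ↦ g (μ * z) / g z) (𝓝[≠] 0) (𝓝 μ) := by
    have hcont (N : ℂ → ℂ) (hN : IsLinearizer f z₀ μ N) : Tendsto N (𝓝[≠] 0) (𝓝 z₀) :=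
      hN.map_zero ▸ (hN.differentiable.continuous.tendsto 0).mono_left nhdsWithin_le_nhds
    refine (hf.tendsto_sub_div_sub (hcont L hL) (hcont M hM) hg_ne).congr fun z ↦ ?_
    simp only [g, hL.semiconj, hM.semiconj]
  have hpow : μ ^ n = μ :=
    tendsto_nhds_unique (hg.tendsto_comp_mul_div_of_analyticOrderAt_eq hn μ) hratio
  have hn1 : n = 1 :=
    (pow_right_strictMono₀ hμ).injective (by simpa [norm_pow] using congrArg norm hpow)
  omega

/-- `φ⁻¹ ∘ f ∘ φ` for the affine map `φ z = a * z + b`. -/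
def affineConj {𝕜 : Type*} [Field 𝕜] (a b : 𝕜) (f : 𝕜 → 𝕜) : 𝕜 → 𝕜 :=
  fun z ↦ (f (a * z + b) - b) / a

theorem HasStrictDerivAt.affineConj {𝕜 : Type*} [NontriviallyNormedField 𝕜] {f : 𝕜 → 𝕜}
    {μ x a : 𝕜} (b : 𝕜) (hf : HasStrictDerivAt f μ x) (ha : a ≠ 0) :
    HasStrictDerivAt (affineConj a b f) μ ((x - b) / a) := by
  have hφ : HasStrictDerivAt (fun z ↦ a * z + b) a ((x - b) / a) := by
    simpa using ((hasStrictDerivAt_id _).const_mul a).add_const b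
  have hx : a * ((x - b) / a) + b = x := by field_simp; ring
  rw [← hx] at hf
  have := HasStrictDerivAt.div_const ((hf.comp ((x - b) / a) hφ).sub_const b) a
  rwa [mul_div_cancel_right₀ _ ha] at this

theorem IsLinearizer.affineConj {f L : ℂ → ℂ} {z₀ μ a : ℂ} (b : ℂ) (hL : IsLinearizer f z₀ μ L)
    (ha : a ≠ 0) :
    IsLinearizer (affineConj a b f) ((z₀ - b) / a) μ (fun z ↦ (L (a * z) - b) / a) where
  differentiable :=
    ((hL.differentiable.comp (differentiable_id.const_mul a)).sub_const b).div_const a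
  map_zero := by simp [hL.map_zero]
  semiconj z := by
    simp only [_root_.affineConj, mul_div_cancel₀ _ ha, sub_add_cancel, hL.semiconj, mul_left_comm]

theorem deriv_comp_mul_sub_div {L : ℂ → ℂ} {a : ℂ} (b : ℂ) (hL : DifferentiableAt ℂ L 0)
    (ha : a ≠ 0) : deriv (fun z ↦ (L (a * z) - b) / a) 0 = deriv L 0 := by
  have hφ : HasDerivAt (fun z : ℂ ↦ a * z) a 0 := by simpa using (hasDerivAt_id 0).const_mul a
  rw [← mul_zero a] at hL
  simpa [mul_div_cancel_right₀ _ ha] using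
    (((hL.hasDerivAt.comp _ hφ).sub_const b).div_const a).deriv

theorem linearizers_of_affinely_conjugate_maps_general (f₁ f₂ L₁ L₂ : ℂ → ℂ) (a b z₁ : ℂ)
    (ha : a ≠ 0)
    (hf₁ : Differentiable ℂ f₁)
    (hconj : ∀ z : ℂ, f₂ z = (f₁ (a * z + b) - b) / a)
    (hrep : 1 < ‖deriv f₁ z₁‖)
    (hL₁ : Differentiable ℂ L₁) (hL₁0 : L₁ 0 = z₁)
    (hL₁eq : ∀ z : ℂ, f₁ (L₁ z) = L₁ (deriv f₁ z₁ * z))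
    (hL₂ : Differentiable ℂ L₂) (hL₂0 : L₂ 0 = (z₁ - b) / a)
    (hL₂eq : ∀ z : ℂ, f₂ (L₂ z) = L₂ (deriv f₂ ((z₁ - b) / a) * z))
    (hnorm : deriv L₁ 0 = deriv L₂ 0) :
    ∀ z : ℂ, L₂ z = (L₁ (a * z) - b) / a := by
  have hf₂ : f₂ = affineConj a b f₁ := funext hconj
  have hf₂_strict : HasStrictDerivAt f₂ (deriv f₁ z₁) ((z₁ - b) / a) :=
    hf₂ ▸ (hf₁.analyticAt z₁).hasStrictDerivAt.affineConj b ha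
  have hM : IsLinearizer f₂ ((z₁ - b) / a) (deriv f₁ z₁) (fun z ↦ (L₁ (a * z) - b) / a) :=
    hf₂ ▸ IsLinearizer.affineConj b ⟨hL₁, hL₁0, hL₁eq⟩ ha
  have hL₂' : IsLinearizer f₂ ((z₁ - b) / a) (deriv f₁ z₁) L₂ :=
    ⟨hL₂, hL₂0, hf₂_strict.hasDerivAt.deriv ▸ hL₂eq⟩
  refine congrFun (hL₂'.eq_of_deriv_eq hf₂_strict hrep hM ?_)
  rw [deriv_comp_mul_sub_div b (hL₁ 0) ha, hnorm]

theorem linearizers_of_affinely_conjugate_maps (f₁ f₂ L₁ L₂ : ℂ → ℂ) (a b z₁ : ℂ)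
    (ha : a ≠ 0)
    (hf₁ : Differentiable ℂ f₁) (hf₂ : Differentiable ℂ f₂)
    (hconj : ∀ z : ℂ, f₂ z = (f₁ (a * z + b) - b) / a)
    (hfix : f₁ z₁ = z₁) (hrep : 1 < ‖deriv f₁ z₁‖)
    (hL₁ : Differentiable ℂ L₁) (hL₁0 : L₁ 0 = z₁)
    (hL₁eq : ∀ z : ℂ, f₁ (L₁ z) = L₁ (deriv f₁ z₁ * z))
    (hL₂ : Differentiable ℂ L₂) (hL₂0 : L₂ 0 = (z₁ - b) / a)
    (hL₂eq : ∀ z : ℂ, f₂ (L₂ z) = L₂ (deriv f₂ ((z₁ - b) / a) * z))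
    (hnorm : deriv L₁ 0 = deriv L₂ 0) :
    ∀ z : ℂ, L₂ z = (L₁ (a * z) - b) / a :=
  linearizers_of_affinely_conjugate_maps_general f₁ f₂ L₁ L₂ a b z₁ ha hf₁ hconj hrep hL₁ hL₁0 hL₁eq
    hL₂ hL₂0 hL₂eq hnorm
end

section
/- Let f be entire, z_0 a repelling fixed point of f with multiplier λ, and L a linearizer of f at z_0. If a ∈ ℂ has infinite backward orbit under f, then a is in the image of L. -/
/-!
If `L` omitted `a`, pick `b ≠ a` with `f b = a`, which exists because the backward orbit of `a` is
infinite. Then `L` also omits `b`, since `L z = b` would give `L (λ z) = f (L z) = a`. By the little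
Picard theorem `L` is constant, contradicting `L'(0) ≠ 0`.

Little Picard is proved by Bloch's argument and a cosine trick. An entire `u` omitting `±1` is
`cos G` with `G` entire, and `G` omits `πℤ`. So `2G/π - 1 = cos H` with `H` entire omitting every
point where `cos` takes an odd integer value. These points meet every disc of radius `7`, while a
nonconstant entire function covers discs of every radius: maximizing `|H'(z)| (ρ - |z - z₀|)` on
a disc gives a point near which `H'` is controlled, and there `H` is close to its linear part.
-/

open Metric Set Filter Topology
open scoped Real

section

variable {X F : Type*} [PseudoMetricSpace X] [ProperSpace X] [NormedAddCommGroup F]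

theorem exists_norm_le_two_mul_on_closedBall {g : X → F} (hg : Continuous g) {x₀ : X} {ρ : ℝ}
    (hρ : 0 < ρ) (hg₀ : g x₀ ≠ 0) :
    ∃ p t, 0 < t ∧ ρ * ‖g x₀‖ ≤ t * ‖g p‖ ∧ ∀ z ∈ closedBall p (t / 2), ‖g z‖ ≤ 2 * ‖g p‖ := by
  set φ : X → ℝ := fun z ↦ (ρ - dist z x₀) * ‖g z‖
  obtain ⟨p, hp, hmax⟩ := (isCompact_closedBall x₀ ρ).exists_isMaxOn
    ⟨x₀, mem_closedBall_self hρ.le⟩ (by fun_prop : Continuous φ).continuousOn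
  have hφ₀ : ρ * ‖g x₀‖ ≤ φ p := by simpa [φ] using hmax (mem_closedBall_self hρ.le)
  have ht : 0 < ρ - dist p x₀ := by
    refine lt_of_le_of_ne (sub_nonneg.2 (mem_closedBall.1 hp)) fun h ↦ ?_
    have : 0 < φ p := hφ₀.trans_lt' (by positivity)
    simp [φ, ← h] at this
  refine ⟨p, ρ - dist p x₀, ht, hφ₀, fun z hz ↦ ?_⟩
  have hzp := dist_triangle z p x₀
  have hz' : dist z p ≤ (ρ - dist p x₀) / 2 := mem_closedBall.1 hz
  have hφz : φ z ≤ φ p := hmax (mem_closedBall.2 (by linarith))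
  have : (ρ - dist p x₀) / 2 * ‖g z‖ ≤ φ z :=
    mul_le_mul_of_nonneg_right (by linarith) (norm_nonneg _)
  nlinarith [norm_nonneg (g z)]

end

theorem Real.exists_cosh_eq_odd_mem_Icc {y : ℝ} (hy : 0 ≤ y) :
    ∃ t ∈ Icc y (y + π), ∃ m : ℤ, Real.cosh t = 2 * m + 1 := by
  have hcosh_pi : 3 ≤ Real.cosh π := by
    rw [Real.cosh_eq]
    nlinarith [Real.quadratic_le_exp_of_nonneg Real.pi_pos.le, Real.pi_gt_three,
      Real.exp_pos (-π)]
  have hgap : Real.cosh y + 2 ≤ Real.cosh (y + π) := by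
    rw [Real.cosh_add]
    nlinarith [Real.one_le_cosh y, Real.sinh_nonneg_iff.2 hy,
      Real.sinh_nonneg_iff.2 Real.pi_pos.le]
  set m := ⌈(Real.cosh y - 1) / 2⌉
  have hm₁ := Int.le_ceil ((Real.cosh y - 1) / 2)
  have hm₂ := Int.ceil_lt_add_one ((Real.cosh y - 1) / 2)
  obtain ⟨t, ht, hcosh⟩ := intermediate_value_Icc (by linarith [Real.pi_pos])
    Real.continuous_cosh.continuousOn (⟨by linarith, by linarith⟩ :
      (2 * m + 1 : ℝ) ∈ Icc (Real.cosh y) (Real.cosh (y + π)))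
  exact ⟨t, ht, m, hcosh⟩

namespace Complex

theorem ball_subset_image_closedBall_of_norm_deriv_sub_le {f : ℂ → ℂ} (hf : Differentiable ℂ f)
    {p : ℂ} {r : ℝ} (hr : 0 < r) (hp : deriv f p ≠ 0)
    (h : ∀ z ∈ closedBall p r, ‖deriv f z - deriv f p‖ ≤ ‖deriv f p‖ / 2) :
    ball (f p) (‖deriv f p‖ * r / 4) ⊆ f '' closedBall p r := by
  have hsphere : ∀ z ∈ sphere p r, ‖deriv f p‖ * r / 2 ≤ ‖f z - f p‖ := by
    intro z hz
    have hzp : ‖z - p‖ = r := by simpa [dist_eq] using hz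
    set E := (f z - deriv f p * z) - (f p - deriv f p * p)
    have hE : ‖E‖ ≤ ‖deriv f p‖ / 2 * ‖z - p‖ :=
      (convex_closedBall p r).norm_image_sub_le_of_norm_hasDerivWithin_le
        (fun w _ ↦ (((hf w).hasDerivAt).sub ((hasDerivAt_id w).const_mul _)).hasDerivWithinAt)
        (fun w hw ↦ by simpa using h w hw) (mem_closedBall_self hr.le)
        (sphere_subset_closedBall hz)
    have hlin : ‖deriv f p‖ * r ≤ ‖f z - f p‖ + ‖E‖ := calc
      ‖deriv f p‖ * r = ‖(f z - f p) - E‖ := by rw [← hzp, ← norm_mul]; congr 1; ring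
      _ ≤ ‖f z - f p‖ + ‖E‖ := norm_sub_le _ _
    rw [hzp] at hE
    linarith
  have hfreq : ∃ᶠ z in 𝓝 p, f z ≠ f p :=
    ((hf p).hasDerivAt.eventually_ne hp).frequently.filter_mono nhdsWithin_le_nhds
  convert hf.diffContOnCl.ball_subset_image_closedBall hr hsphere hfreq using 2
  ring

theorem exists_ball_subset_range_of_deriv_ne_zero {f : ℂ → ℂ} (hf : Differentiable ℂ f) {z₀ : ℂ}
    (hz₀ : deriv f z₀ ≠ 0) (R : ℝ) : ∃ c, ball c R ⊆ range f := by
  rcases le_or_gt R 0 with hR | hR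
  · exact ⟨0, by simp [ball_eq_empty.2 hR]⟩
  have hz₀' : 0 < ‖deriv f z₀‖ := norm_pos_iff.2 hz₀
  obtain ⟨p, t, ht, hρt, hbound⟩ := exists_norm_le_two_mul_on_closedBall hf.deriv.continuous
    (by positivity : 0 < 64 * R / ‖deriv f z₀‖) hz₀
  rw [div_mul_cancel₀ _ hz₀'.ne'] at hρt
  have hA : 0 < ‖deriv f p‖ := pos_of_mul_pos_right (hρt.trans_lt' (by positivity)) ht.le
  have hclose : ∀ z ∈ closedBall p (t / 16), ‖deriv f z - deriv f p‖ ≤ ‖deriv f p‖ / 2 := by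
    intro z hz
    have hmaps : MapsTo (deriv f) (ball p (t / 2)) (closedBall (deriv f p) (3 * ‖deriv f p‖)) :=
      fun w hw ↦ mem_closedBall.2 <| (dist_le_norm_add_norm _ _).trans <| by
        linarith [hbound w (ball_subset_closedBall hw)]
    have hzp : dist z p ≤ t / 16 := mem_closedBall.1 hz
    calc ‖deriv f z - deriv f p‖ = dist (deriv f z) (deriv f p) := (dist_eq_norm _ _).symm
      _ ≤ 3 * ‖deriv f p‖ / (t / 2) * dist z p :=
        dist_le_div_mul_dist_of_mapsTo_ball hf.deriv.differentiableOn hmaps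
          (mem_ball.2 (by linarith))
      _ ≤ 3 * ‖deriv f p‖ / (t / 2) * (t / 16) := by gcongr
      _ ≤ ‖deriv f p‖ / 2 := by field_simp; linarith
  refine ⟨f p, (ball_subset_ball ?_).trans ((ball_subset_image_closedBall_of_norm_deriv_sub_le
    hf (by positivity) (norm_pos_iff.1 hA) hclose).trans (image_subset_range _ _))⟩
  linarith

theorem exists_cexp_eq_of_ne_zero {h : ℂ → ℂ} (hh : Differentiable ℂ h) (h₀ : ∀ z, h z ≠ 0) :
    ∃ g : ℂ → ℂ, Differentiable ℂ g ∧ ∀ z, exp (g z) = h z := by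
  obtain ⟨g, hg₀, hg⟩ :=
    (hh.deriv.div hh h₀).isExactOn_univ.with_val_at 0 (log (h 0))
  have hg' : ∀ z, HasDerivAt g (deriv h z / h z) z := fun z ↦ hg z (mem_univ z)
  -- `h * exp (-g)` has derivative zero, hence is constant, equal to its value `1` at `0`.
  have hderiv : ∀ z, HasDerivAt (fun z ↦ h z * exp (-g z)) 0 z := fun z ↦ by
    refine ((hh z).hasDerivAt.mul (hg' z).fun_neg.cexp).congr_deriv ?_
    field_simp [h₀ z]
    ring
  refine ⟨g, fun z ↦ (hg' z).differentiableAt, fun z ↦ ?_⟩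
  have := is_const_of_deriv_eq_zero (fun z ↦ (hderiv z).differentiableAt)
    (fun z ↦ (hderiv z).deriv) z 0
  rw [hg₀, exp_neg (log _), exp_log (h₀ 0), mul_inv_cancel₀ (h₀ 0), exp_neg] at this
  exact (eq_of_mul_inv_eq_one this).symm

theorem exists_cos_eq_of_sq_ne_one {u : ℂ → ℂ} (hu : Differentiable ℂ u)
    (h₁ : ∀ z, u z ^ 2 ≠ 1) : ∃ G : ℂ → ℂ, Differentiable ℂ G ∧ ∀ z, cos (G z) = u z := by
  obtain ⟨g, hg, hexp⟩ := exists_cexp_eq_of_ne_zero (h := fun z ↦ 1 - u z ^ 2) (by fun_prop)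
    fun z ↦ sub_ne_zero.2 (h₁ z).symm
  set v : ℂ → ℂ := fun z ↦ exp (g z / 2)
  -- `v = √(1 - u²)`, so `u + I v` and `u - I v` are mutually inverse.
  have hv : ∀ z, (u z + I * v z) * (u z - I * v z) = 1 := fun z ↦ by
    have : v z ^ 2 = 1 - u z ^ 2 := by rw [← exp_nat_mul, ← hexp]; ring_nf
    linear_combination this - v z ^ 2 * I_sq
  obtain ⟨g₂, hg₂, hexp₂⟩ := exists_cexp_eq_of_ne_zero (h := fun z ↦ u z + I * v z)
    (by fun_prop) fun z ↦ left_ne_zero_of_mul_eq_one (hv z)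
  refine ⟨fun z ↦ -I * g₂ z, by fun_prop, fun z ↦ ?_⟩
  have hinv : exp (-g₂ z) = u z - I * v z := by
    rw [exp_neg, hexp₂]
    exact inv_eq_of_mul_eq_one_right (hv z)
  show (exp (-I * g₂ z * I) + exp (-(-I * g₂ z) * I)) / 2 = u z
  rw [show -I * g₂ z * I = g₂ z by linear_combination -g₂ z * I_sq,
    show -(-I * g₂ z) * I = -g₂ z by linear_combination g₂ z * I_sq, hexp₂, hinv]
  ring

theorem exists_cos_eq_odd_mem_ball (c : ℂ) : ∃ w ∈ ball c 7, ∃ m : ℤ, cos w = 2 * m + 1 := by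
  obtain ⟨t, ht, m, hm⟩ := Real.exists_cosh_eq_odd_mem_Icc (abs_nonneg c.im)
  set s := if 0 ≤ c.im then t else -t
  have hs : |s - c.im| ≤ π := by
    rw [abs_le]
    simp only [s]
    split_ifs with h
    · rw [abs_of_nonneg h] at ht; constructor <;> linarith [ht.1, ht.2, Real.pi_pos]
    · rw [abs_of_neg (not_le.1 h)] at ht; constructor <;> linarith [ht.1, ht.2, Real.pi_pos]
  have hcosh : Real.cosh s = 2 * m + 1 := by
    simp only [s]; split_ifs <;> simp [hm]
  set k := round (c.re / (2 * π))
  have hk : |k * (2 * π) - c.re| ≤ π := by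
    have := abs_sub_round (c.re / (2 * π))
    rw [abs_sub_comm] at this
    have h2π : (0 : ℝ) < 2 * π := by positivity
    calc |k * (2 * π) - c.re| = |(k - c.re / (2 * π)) * (2 * π)| := by
          rw [sub_mul, div_mul_cancel₀ _ h2π.ne']
      _ = |k - c.re / (2 * π)| * (2 * π) := by rw [abs_mul, abs_of_pos h2π]
      _ ≤ 1 / 2 * (2 * π) := by gcongr
      _ = π := by ring
  refine ⟨s * I + k * (2 * π), ?_, m, ?_⟩
  · rw [mem_ball, dist_eq]
    refine (norm_le_abs_re_add_abs_im _).trans_lt ?_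
    have hre : (s * I + k * (2 * π) - c).re = k * (2 * π) - c.re := by simp
    have him : (s * I + k * (2 * π) - c).im = s - c.im := by simp
    rw [hre, him]
    linarith [Real.pi_lt_d2]
  · rw [cos_add_int_mul_two_pi, cos_mul_I, ← ofReal_cosh, hcosh]
    push_cast; ring

theorem apply_eq_apply_of_forall_sq_ne_one {u : ℂ → ℂ} (hu : Differentiable ℂ u)
    (h₁ : ∀ z, u z ^ 2 ≠ 1) (x y : ℂ) : u x = u y := by
  obtain ⟨G, hG, hGu⟩ := exists_cos_eq_of_sq_ne_one hu h₁
  have hG_mul_pi : ∀ z (n : ℤ), G z ≠ n * π := fun z n hn ↦ h₁ z <| by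
    rw [← hGu z, hn, ← sin_sq_add_cos_sq (n * π : ℂ), sin_int_mul_pi]
    ring
  set V : ℂ → ℂ := fun z ↦ 2 * G z / π - 1
  have hV : ∀ z, V z ^ 2 ≠ 1 := fun z hz ↦ by
    rcases sq_eq_one_iff.1 hz with h | h
    · exact hG_mul_pi z 1 (by simp only [V] at h; field_simp at h; linear_combination h / 2)
    · exact hG_mul_pi z 0 (by simp only [V] at h; field_simp at h; linear_combination h / 2)
  obtain ⟨H, hH, hHV⟩ := exists_cos_eq_of_sq_ne_one (by fun_prop) hV
  have hH_odd : ∀ z (m : ℤ), cos (H z) ≠ 2 * m + 1 := fun z m hm ↦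
    hG_mul_pi z (m + 1) (by
      rw [hHV z] at hm
      simp only [V] at hm
      field_simp at hm
      push_cast
      linear_combination hm / 2)
  have hH_deriv : ∀ z, deriv H z = 0 := by
    by_contra! ⟨z, hz⟩
    obtain ⟨c, hc⟩ := exists_ball_subset_range_of_deriv_ne_zero hH hz 7
    obtain ⟨w, hw, m, hm⟩ := exists_cos_eq_odd_mem_ball c
    obtain ⟨z', rfl⟩ := hc hw
    exact hH_odd z' m hm
  have hHxy := is_const_of_deriv_eq_zero hH hH_deriv x y
  have hVxy : V x = V y := by rw [← hHV, ← hHV, hHxy]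
  have hGxy : G x = G y := by simp only [V] at hVxy; field_simp at hVxy; linear_combination hVxy / 2
  rw [← hGu, ← hGu, hGxy]

theorem apply_eq_apply_of_forall_ne_of_forall_ne {f : ℂ → ℂ} (hf : Differentiable ℂ f) {a b : ℂ}
    (hab : a ≠ b) (ha : ∀ z, f z ≠ a) (hb : ∀ z, f z ≠ b) (x y : ℂ) : f x = f y := by
  have hba : b - a ≠ 0 := sub_ne_zero.2 hab.symm
  set u : ℂ → ℂ := fun z ↦ (2 * f z - a - b) / (b - a)
  have hu : ∀ z, u z ^ 2 ≠ 1 := fun z hz ↦ by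
    rcases sq_eq_one_iff.1 hz with h | h <;> simp only [u] at h <;> field_simp at h
    · exact hb z (by linear_combination h / 2)
    · exact ha z (by linear_combination h / 2)
  have := apply_eq_apply_of_forall_sq_ne_one (by fun_prop) hu x y
  simp only [u] at this
  field_simp at this
  linear_combination this / 2

end Complex

theorem Function.exists_ne_apply_eq_of_infinite_preimage_iterate {α : Type*} {f : α → α} {a : α}
    (ha : {z | ∃ n, f^[n] z = a}.Infinite) : ∃ b, f b = a ∧ b ≠ a := by
  by_contra! h
  refine ha ((finite_singleton a).subset ?_)
  rintro z ⟨n, hn⟩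
  induction n generalizing z with
  | zero => exact hn
  | succ n ih => exact h z (ih (by rwa [Function.iterate_succ_apply] at hn))

theorem infinite_backward_orbit_in_image_of_linearizer_general (f L : ℂ → ℂ)
    (z₀ : ℂ)
    (hL : Differentiable ℂ L) (hL' : deriv L 0 ≠ 0)
    (hLeq : ∀ z : ℂ, f (L z) = L (deriv f z₀ * z))
    (a : ℂ) (ha : {z : ℂ | ∃ n : ℕ, f^[n] z = a}.Infinite) :
    a ∈ Set.range L := by
  by_contra haL
  obtain ⟨b, hba, hb⟩ := Function.exists_ne_apply_eq_of_infinite_preimage_iterate ha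
  have hbL : ∀ z, L z ≠ b := fun z hz ↦ haL ⟨deriv f z₀ * z, by rw [← hLeq, hz, hba]⟩
  have hL_const : L = fun _ ↦ L 0 := funext fun z ↦
    Complex.apply_eq_apply_of_forall_ne_of_forall_ne hL hb.symm (fun z hz ↦ haL ⟨z, hz⟩) hbL z 0
  exact hL' (by rw [hL_const, deriv_const])

theorem infinite_backward_orbit_in_image_of_linearizer (f L : ℂ → ℂ)
    (hf : Differentiable ℂ f)
    (z₀ : ℂ) (hfix : f z₀ = z₀) (hrep : 1 < ‖deriv f z₀‖)
    (hL : Differentiable ℂ L) (hL0 : L 0 = z₀) (hL' : deriv L 0 ≠ 0)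
    (hLeq : ∀ z : ℂ, f (L z) = L (deriv f z₀ * z))
    (a : ℂ) (ha : {z : ℂ | ∃ n : ℕ, f^[n] z = a}.Infinite) :
    a ∈ Set.range L :=
  infinite_backward_orbit_in_image_of_linearizer_general f L z₀ hL hL' hLeq a ha
end

section
/- Let f be entire with a repelling fixed point z_0, multiplier λ, and linearizer L. Every critical value of L lies in ∪_{n≥0} f^n(Cv(f)) \ Ev(f), where Cv(f) = f({f' = 0}) is the set of critical values of f and Ev(f) is the set of exceptional values of f. -/
/-!
Let `z` be a critical point of `L` and `a k = λ⁻¹ ^ k * z`, so that `f^[k] (L (a k)) = L z` and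
`a k → 0`. Since `L' 0 ≠ 0`, some `L' (a k)` is nonzero; at the first such `k`, the chain rule
`f' (L u) * L' u = λ * L' (λ * u)` applied to `u = a k` makes `L (a k)` a critical point of `f`,
so `L z` lies in the forward orbit of a critical value. Also `L (a k) → L 0` with
`L (a k) ≠ L 0` for large `k`, so these preimages of `L z` under the iterates of `f` are
infinitely many, and `L z` is not exceptional.
-/

open Filter Topology

theorem Set.infinite_range_of_tendsto_of_eventually_ne {X : Type*} [TopologicalSpace X] [T1Space X]
    {u : ℕ → X} {p : X} (hu : Tendsto u atTop (𝓝 p)) (hne : ∀ᶠ k in atTop, u k ≠ p) :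
    (Set.range u).Infinite := by
  intro hfin
  have hclosed : IsClosed (Set.range u \ {p}) := hfin.sdiff.isClosed
  have hp := hclosed.mem_of_tendsto hu (hne.mono fun k hk => ⟨Set.mem_range_self k, hk⟩)
  exact hp.2 rfl

theorem Set.apply_mem_iUnion_iterate_image {α : Type*} {f : α → α} {S : Set α} {x : α}
    (hx : x ∈ ⋃ n : ℕ, f^[n] '' S) : f x ∈ ⋃ n : ℕ, f^[n] '' S := by
  obtain ⟨n, y, hy, rfl⟩ := Set.mem_iUnion.mp hx
  exact Set.mem_iUnion.mpr ⟨n + 1, y, hy, Function.iterate_succ_apply' f n y⟩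

theorem iterate_apply_eq_of_linearizes {α M : Type*} [Monoid M] {f : α → α} {L : M → α} {c : M}
    (h : ∀ z, f (L z) = L (c * z)) (n : ℕ) (z : M) : f^[n] (L z) = L (c ^ n * z) := by
  have hsemi : Function.Semiconj L (c * ·) f := fun z => (h z).symm
  simpa only [mul_left_iterate] using (hsemi.iterate_right n z).symm

section Linearizer

variable {𝕜 : Type*} [NontriviallyNormedField 𝕜] {f L : 𝕜 → 𝕜} {c : 𝕜}

theorem deriv_mul_deriv_eq_of_linearizes (h : ∀ z, f (L z) = L (c * z)) {u : 𝕜}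
    (hf : DifferentiableAt 𝕜 f (L u)) (hL : DifferentiableAt 𝕜 L u) :
    deriv f (L u) * deriv L u = c * deriv L (c * u) := by
  rw [← deriv_comp u hf hL, show f ∘ L = (L <| c * ·) from funext h, deriv_comp_mul_left,
    smul_eq_mul]

theorem apply_mem_postcritical_of_deriv_eq_zero (hf : Differentiable 𝕜 f)
    (hL : Differentiable 𝕜 L) (h : ∀ z, f (L z) = L (c * z)) (hc : c ≠ 0) (k : ℕ) {z : 𝕜}
    (hz : deriv L z = 0) (hk : deriv L (c⁻¹ ^ k * z) ≠ 0) :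
    L z ∈ ⋃ n : ℕ, f^[n] '' (f '' {x | deriv f x = 0}) := by
  induction k generalizing z with
  | zero => simp [hz] at hk
  | succ k ih =>
    set u := c⁻¹ * z
    have hLz : L z = f (L u) := by rw [h, mul_inv_cancel_left₀ hc]
    rw [hLz]
    by_cases hu : deriv L u = 0
    · refine Set.apply_mem_iUnion_iterate_image (ih hu ?_)
      rwa [← mul_assoc, ← pow_succ]
    · have hcrit : deriv f (L u) = 0 := by
        have := deriv_mul_deriv_eq_of_linearizes h (hf (L u)) (hL u)
        rw [mul_inv_cancel_left₀ hc, hz, mul_zero] at this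
        exact (mul_eq_zero.mp this).resolve_right hu
      exact Set.mem_iUnion.mpr ⟨0, f (L u), ⟨L u, hcrit, rfl⟩, rfl⟩

theorem tendsto_inv_pow_mul_nhdsNE_zero (hc : 1 < ‖c‖) {z : 𝕜} (hz : z ≠ 0) :
    Tendsto (fun k : ℕ => c⁻¹ ^ k * z) atTop (𝓝[≠] 0) := by
  have hc0 : c ≠ 0 := norm_pos_iff.mp (one_pos.trans hc)
  refine tendsto_nhdsWithin_of_tendsto_nhds_of_eventually_within _ ?_
    (Eventually.of_forall fun k => mul_ne_zero (pow_ne_zero _ (inv_ne_zero hc0)) hz)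
  simpa only [zero_mul] using (tendsto_pow_atTop_nhds_zero_of_norm_lt_one
    (by rwa [norm_inv, inv_lt_one₀ (one_pos.trans hc)])).mul_const z

end Linearizer

theorem critical_values_of_linearizer_subset_general (f L : ℂ → ℂ)
    (hf : Differentiable ℂ f)
    (z₀ : ℂ) (hrep : 1 < ‖deriv f z₀‖)
    (hL : Differentiable ℂ L) (hL' : deriv L 0 ≠ 0)
    (hLeq : ∀ z : ℂ, f (L z) = L (deriv f z₀ * z)) :
    ∀ w : ℂ, (∃ z : ℂ, L z = w ∧ deriv L z = 0) →
      (w ∈ ⋃ n : ℕ, f^[n] '' (f '' {z : ℂ | deriv f z = 0})) ∧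
      ¬ {z : ℂ | ∃ n : ℕ, f^[n] z = w}.Finite := by
  rintro w ⟨z, rfl, hz⟩
  set c := deriv f z₀
  have hc : c ≠ 0 := norm_pos_iff.mp (one_pos.trans hrep)
  have hz0 : z ≠ 0 := by rintro rfl; exact hL' hz
  have ha := tendsto_inv_pow_mul_nhdsNE_zero hrep hz0
  constructor
  · have hderiv : Tendsto (fun k : ℕ => deriv L (c⁻¹ ^ k * z)) atTop (𝓝 (deriv L 0)) :=
      ((hL.analyticAt 0).deriv.continuousAt.tendsto).comp (ha.mono_right nhdsWithin_le_nhds)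
    obtain ⟨k, hk⟩ := (hderiv.eventually_ne hL').exists
    exact apply_mem_postcritical_of_deriv_eq_zero hf hL hLeq hc k hz hk
  · have hrange : (Set.range fun k : ℕ => L (c⁻¹ ^ k * z)).Infinite :=
      Set.infinite_range_of_tendsto_of_eventually_ne
        ((hL.continuous.tendsto 0).comp (ha.mono_right nhdsWithin_le_nhds))
        (ha.eventually ((hL 0).hasDerivAt.eventually_ne hL'))
    refine fun hfin => hrange (hfin.subset ?_)
    rintro _ ⟨k, rfl⟩
    exact ⟨k, by rw [iterate_apply_eq_of_linearizes hLeq, ← mul_assoc, ← mul_pow,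
      mul_inv_cancel₀ hc, one_pow, one_mul]⟩

theorem critical_values_of_linearizer_subset (f L : ℂ → ℂ)
    (hf : Differentiable ℂ f)
    (z₀ : ℂ) (hfix : f z₀ = z₀) (hrep : 1 < ‖deriv f z₀‖)
    (hL : Differentiable ℂ L) (hL0 : L 0 = z₀) (hL' : deriv L 0 ≠ 0)
    (hLeq : ∀ z : ℂ, f (L z) = L (deriv f z₀ * z)) :
    ∀ w : ℂ, (∃ z : ℂ, L z = w ∧ deriv L z = 0) →
      (w ∈ ⋃ n : ℕ, f^[n] '' (f '' {z : ℂ | deriv f z = 0})) ∧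
      ¬ {z : ℂ | ∃ n : ℕ, f^[n] z = w}.Finite :=
  critical_values_of_linearizer_subset_general f L hf z₀ hrep hL hL' hLeq
end

section
/- Let p be a polynomial of degree d ≥ 2 with repelling fixed point z_0 of multiplier λ, and let L be a linearizer of p at z_0. Then the order of L satisfies ρ(L) = log d / log|λ|, where ρ(L) = limsup_{r→∞} log log M(L,r) / log r and M(L,r) = max_{|z|=r} |L(z)|. -/
/-!
With `u r = log (maxMod L r)`, the functional equation gives `maxMod L (‖λ‖ * r) =
max_{‖z‖ = r} ‖p (L z)‖`, and `‖p w‖` is comparable to `‖w‖ ^ d` for large `‖w‖`; hence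
`u (‖λ‖ * r) = d * u r + O(1)`. Iterating along the geometric sequence `‖λ‖ ^ n * r₁` and
interpolating by monotonicity of `maxMod L` gives `log (u r) = (log d / log ‖λ‖) * log r + O(1)`,
so the quotient in the definition of the order even converges.
-/

noncomputable def maxMod (L : ℂ → ℂ) (r : ℝ) : ℝ :=
  sSup ((fun z => ‖L z‖) '' Metric.sphere (0:ℂ) r)

open Filter Real Set Metric Bornology Topology Polynomial

lemma pow_mul_le_apply_pow_mul {f : ℝ → ℝ} {a D r₀ : ℝ} (ha : 1 ≤ a) (hD : 0 ≤ D) (hr₀ : 0 ≤ r₀)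
    (h : ∀ r, r₀ ≤ r → D * f r ≤ f (a * r)) (n : ℕ) {r : ℝ} (hr : r₀ ≤ r) :
    D ^ n * f r ≤ f (a ^ n * r) := by
  induction n with
  | zero => simp
  | succ n ih =>
    calc D ^ (n + 1) * f r = D * (D ^ n * f r) := by ring
      _ ≤ D * f (a ^ n * r) := mul_le_mul_of_nonneg_left ih hD
      _ ≤ f (a * (a ^ n * r)) :=
          h _ (hr.trans (le_mul_of_one_le_left (hr₀.trans hr) (one_le_pow₀ ha)))
      _ = f (a ^ (n + 1) * r) := by rw [← mul_assoc, ← pow_succ']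

lemma exists_abs_log_sub_mul_log_le {u : ℝ → ℝ} {a d c₁ c₂ r₁ : ℝ} (ha : 1 < a) (hd : 1 < d)
    (hr₁ : 0 < r₁) (hc₁ : 0 < c₁) (hmono : MonotoneOn u (Ici r₁))
    (hlow : ∀ n : ℕ, d ^ n * c₁ ≤ u (a ^ n * r₁)) (hup : ∀ n : ℕ, u (a ^ n * r₁) ≤ d ^ n * c₂) :
    ∃ B, ∀ r, r₁ ≤ r → |log (u r) - log d / log a * log r| ≤ B := by
  set β := log d / log a
  have hloga : 0 < log a := log_pos ha
  have hβ : 0 < β := div_pos (log_pos hd) hloga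
  have hβa : β * log a = log d := div_mul_cancel₀ _ hloga.ne'
  have hd₀ : 0 < d := one_pos.trans hd
  have hc₂ : 0 < c₂ := hc₁.trans_le (by simpa using (hlow 0).trans (hup 0))
  refine ⟨log d + |log c₁| + |log c₂| + |β * log r₁|, fun r hr => ?_⟩
  have hr₀ : 0 < r := hr₁.trans_le hr
  obtain ⟨n, hn, hn'⟩ := exists_nat_pow_near ((one_le_div hr₁).2 hr) ha
  have hnr : a ^ n * r₁ ≤ r := (le_div_iff₀ hr₁).1 hn
  have hrn : r ≤ a ^ (n + 1) * r₁ := ((div_lt_iff₀ hr₁).1 hn').le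
  have hmem : ∀ m : ℕ, a ^ m * r₁ ∈ Ici r₁ := fun m =>
    le_mul_of_one_le_left hr₁.le (one_le_pow₀ ha.le)
  have hur₁ : d ^ n * c₁ ≤ u r := (hlow n).trans (hmono (hmem n) hr hnr)
  have hur₂ : u r ≤ d ^ (n + 1) * c₂ := (hmono hr (hmem (n + 1)) hrn).trans (hup (n + 1))
  have hlogu₁ := log_le_log (by positivity) hur₁
  have hlogu₂ := log_le_log ((mul_pos (pow_pos hd₀ n) hc₁).trans_le hur₁) hur₂
  have hlogr₁ := log_le_log (by positivity) hn
  have hlogr₂ := log_le_log (by positivity) hn'.le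
  rw [log_mul (by positivity) hc₁.ne', log_pow] at hlogu₁
  rw [log_mul (by positivity) hc₂.ne', log_pow] at hlogu₂
  rw [log_pow, log_div hr₀.ne' hr₁.ne'] at hlogr₁ hlogr₂
  have hβr₁ := mul_le_mul_of_nonneg_left hlogr₁ hβ.le
  have hβr₂ := mul_le_mul_of_nonneg_left hlogr₂ hβ.le
  push_cast at hlogu₂ hβr₂
  rw [abs_le]
  constructor <;> nlinarith [neg_abs_le (log c₁), le_abs_self (log c₂), neg_abs_le (β * log r₁),
    le_abs_self (β * log r₁), abs_nonneg (log c₂), abs_nonneg (log c₁), log_pos hd]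

lemma tendsto_div_log_of_abs_sub_mul_log_le {f : ℝ → ℝ} {β B : ℝ}
    (h : ∀ᶠ r in atTop, |f r - β * log r| ≤ B) :
    Tendsto (fun r => f r / log r) atTop (𝓝 β) := by
  have hB : Tendsto (fun r => B / log r) atTop (𝓝 0) :=
    tendsto_const_nhds.div_atTop tendsto_log_atTop
  refine tendsto_of_tendsto_of_tendsto_of_le_of_le' (by simpa using tendsto_const_nhds.sub hB)
    (by simpa using tendsto_const_nhds.add hB) ?_ ?_ <;>
  filter_upwards [h, eventually_gt_atTop 1] with r hr hr₁ <;>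
  have hlog := log_pos hr₁ <;>
  rw [abs_le] at hr
  · rw [show β - B / log r = (β * log r - B) / log r by field_simp]
    exact div_le_div_of_nonneg_right (by linarith) hlog.le
  · rw [show β + B / log r = (β * log r + B) / log r by field_simp]
    exact div_le_div_of_nonneg_right (by linarith) hlog.le

lemma tendsto_log_div_log_of_abs_sub_mul_le {u : ℝ → ℝ} {a d K r₀ : ℝ} (ha : 1 < a) (hd : 1 < d)
    (hr₀ : 0 < r₀) (hmono : MonotoneOn u (Ici r₀)) (hu : Tendsto u atTop atTop)
    (hrec : ∀ r, r₀ ≤ r → |u (a * r) - d * u r| ≤ K) :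
    Tendsto (fun r => log (u r) / log r) atTop (𝓝 (log d / log a)) := by
  -- with `K' = K / (d - 1)`, both `u - K'` and `-u - K'` grow at least by the factor `d`
  set K' := K / (d - 1)
  have hK' : K = (d - 1) * K' := (mul_div_cancel₀ _ (sub_pos.2 hd).ne').symm
  obtain ⟨r₁, hr₁⟩ := eventually_atTop.1 ((hu.eventually_ge_atTop (K' + 1)).and
    (eventually_ge_atTop (max r₀ 1)))
  have hr₀₁ : r₀ ≤ r₁ := le_of_max_le_left (hr₁ r₁ le_rfl).2
  have hr₁pos : 0 < r₁ := hr₀.trans_le hr₀₁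
  have hgrow : ∀ r, r₁ ≤ r → d * (u r - K') ≤ u (a * r) - K' := fun r hr => by
    have := (abs_le.1 (hrec r (hr₀₁.trans hr))).1
    nlinarith
  have hgrow' : ∀ r, r₁ ≤ r → d * (-u r - K') ≤ -u (a * r) - K' := fun r hr => by
    have := (abs_le.1 (hrec r (hr₀₁.trans hr))).2
    nlinarith
  have hK'₀ : 0 ≤ K' := div_nonneg ((abs_nonneg _).trans (hrec r₀ le_rfl)) (sub_pos.2 hd).le
  have hd₀ : 0 ≤ d := zero_le_one.trans hd.le
  have hlow := pow_mul_le_apply_pow_mul (f := fun r => u r - K') ha.le hd₀ hr₁pos.le hgrow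
  have hup := pow_mul_le_apply_pow_mul (f := fun r => -u r - K') ha.le hd₀ hr₁pos.le hgrow'
  obtain ⟨B, hB⟩ := exists_abs_log_sub_mul_log_le (c₁ := u r₁ - K') (c₂ := u r₁ + K') ha hd hr₁pos
    (by linarith [(hr₁ r₁ le_rfl).1]) (hmono.mono (Ici_subset_Ici.2 hr₀₁))
    (fun n => by linarith [hlow n le_rfl]) (fun n => by linarith [hup n le_rfl])
  exact tendsto_div_log_of_abs_sub_mul_log_le (eventually_atTop.2 ⟨r₁, hB⟩)

theorem Polynomial.exists_mul_pow_le_norm_eval_le {𝕜 : Type*} [NormedField 𝕜] {p : 𝕜[X]}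
    (hp : p ≠ 0) : ∃ c₁ c₂ : ℝ, 0 < c₁ ∧ 0 < c₂ ∧ ∀ᶠ w in cobounded 𝕜,
      c₁ * ‖w‖ ^ p.natDegree ≤ ‖p.eval w‖ ∧ ‖p.eval w‖ ≤ c₂ * ‖w‖ ^ p.natDegree := by
  have hlc : 0 < ‖p.leadingCoeff‖ := norm_pos_iff.2 (leadingCoeff_ne_zero.2 hp)
  have hequiv := isEquivalent_cobounded_leading_monomial (P := p)
  obtain ⟨c, hc, hlow⟩ := hequiv.isBigO_symm.exists_pos
  obtain ⟨C, hC, hup⟩ := hequiv.isBigO.exists_pos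
  refine ⟨‖p.leadingCoeff‖ / c, C * ‖p.leadingCoeff‖, div_pos hlc hc, mul_pos hC hlc, ?_⟩
  filter_upwards [hlow.bound, hup.bound] with w hw₁ hw₂
  simp only [norm_mul, norm_pow] at hw₁ hw₂
  constructor
  · rw [div_mul_eq_mul_div, div_le_iff₀ hc]
    linarith
  · linarith

section MaxMod

variable {L : ℂ → ℂ}

lemma maxMod_nonneg (L : ℂ → ℂ) (r : ℝ) : 0 ≤ maxMod L r :=
  Real.sSup_nonneg (by rintro _ ⟨z, -, rfl⟩; positivity)

lemma bddAbove_norm_image_sphere (hL : Continuous L) (r : ℝ) :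
    BddAbove ((fun z => ‖L z‖) '' sphere (0:ℂ) r) :=
  ((isCompact_sphere 0 r).image (continuous_norm.comp hL)).bddAbove

lemma norm_le_maxMod (hL : Continuous L) {z : ℂ} {r : ℝ} (hz : ‖z‖ = r) :
    ‖L z‖ ≤ maxMod L r :=
  le_csSup (bddAbove_norm_image_sphere hL r) ⟨z, by simpa using hz, rfl⟩

lemma exists_norm_eq_maxMod (hL : Continuous L) {r : ℝ} (hr : 0 ≤ r) :
    ∃ z : ℂ, ‖z‖ = r ∧ ‖L z‖ = maxMod L r := by
  obtain ⟨z, hz, hzmax⟩ := ((isCompact_sphere (0:ℂ) r).image (continuous_norm.comp hL)).sSup_mem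
    ((NormedSpace.sphere_nonempty.2 hr).image _)
  exact ⟨z, by simpa using hz, hzmax⟩

lemma maxMod_monotone (hL : Differentiable ℂ L) : Monotone (maxMod L) := by
  intro r s hrs
  rcases (sphere (0:ℂ) r).eq_empty_or_nonempty with hr | hr
  · rw [show maxMod L r = 0 by simp [maxMod, hr]]
    exact maxMod_nonneg L s
  rcases hrs.eq_or_lt with rfl | hrs
  · exact le_rfl
  have hs : s ≠ 0 :=
    (hrs.trans_le' ((norm_nonneg _).trans_eq (mem_sphere_zero_iff_norm.1 hr.some_mem))).ne'
  refine csSup_le (hr.image _) ?_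
  rintro _ ⟨z, hz, rfl⟩
  refine Complex.norm_le_of_forall_mem_frontier_norm_le (isBounded_ball (x := 0) (r := s))
    hL.diffContOnCl (fun w hw => norm_le_maxMod hL.continuous ?_) ?_
  · simpa [frontier_ball (0:ℂ) hs] using hw
  · rw [closure_ball (0:ℂ) hs, mem_closedBall_zero_iff]
    exact (mem_sphere_zero_iff_norm.1 hz).trans_le hrs.le

lemma tendsto_maxMod_atTop (hL : Differentiable ℂ L) (hunb : ¬ IsBounded (range L)) :
    Tendsto (maxMod L) atTop atTop := by
  refine tendsto_atTop_atTop_of_monotone (maxMod_monotone hL) fun b => ?_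
  by_contra! h
  exact hunb <| isBounded_iff_forall_norm_le.2
    ⟨b, forall_mem_range.2 fun z => (norm_le_maxMod hL.continuous rfl).trans (h ‖z‖).le⟩

lemma maxMod_comp_mul_left {lam : ℂ} (hlam : lam ≠ 0) (r : ℝ) :
    maxMod (fun z => L (lam * z)) r = maxMod L (‖lam‖ * r) := by
  have hsphere : (lam * ·) '' sphere (0:ℂ) r = sphere 0 (‖lam‖ * r) :=
    image_smul.trans (by simpa using smul_sphere' hlam (0:ℂ) r)
  rw [maxMod, maxMod, ← hsphere, image_image]

lemma maxMod_comp_le {g : ℂ → ℂ} (hg : Differentiable ℂ g) (hL : Continuous L) (r : ℝ) :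
    maxMod (g ∘ L) r ≤ maxMod g (maxMod L r) := by
  refine Real.sSup_le ?_ (maxMod_nonneg _ _)
  rintro _ ⟨z, hz, rfl⟩
  exact (norm_le_maxMod hg.continuous rfl).trans
    (maxMod_monotone hg (norm_le_maxMod hL (mem_sphere_zero_iff_norm.1 hz)))

end MaxMod

lemma exists_abs_log_maxMod_comp_sub_le {L : ℂ → ℂ} (hL : Continuous L) {p : ℂ[X]} (hp : p ≠ 0) :
    ∃ C R : ℝ, ∀ r, 0 ≤ r → R ≤ maxMod L r →
      |log (maxMod (fun z => p.eval (L z)) r) - p.natDegree * log (maxMod L r)| ≤ C := by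
  obtain ⟨c₁, c₂, hc₁, hc₂, hbounds⟩ := p.exists_mul_pow_le_norm_eval_le hp
  obtain ⟨R, -, hR⟩ := hasBasis_cobounded_norm.eventually_iff.1 hbounds
  refine ⟨|log c₁| + |log c₂|, max R 1, fun r hr hMr => ?_⟩
  have hRM : R ≤ maxMod L r := le_of_max_le_left hMr
  have hMpos : 0 < maxMod L r := one_pos.trans_le (le_of_max_le_right hMr)
  obtain ⟨z, hz, hzM⟩ := exists_norm_eq_maxMod hL hr
  obtain ⟨w, hw, hwM⟩ := exists_norm_eq_maxMod p.differentiable.continuous hMpos.le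
  have hLz := (hR (x := L z) (hRM.trans_eq hzM.symm)).1
  have hpw := (hR (x := w) (hRM.trans_eq hw.symm)).2
  rw [hzM] at hLz
  rw [hw] at hpw
  set M := maxMod L r
  have hlow : c₁ * M ^ p.natDegree ≤ maxMod (fun z => p.eval (L z)) r :=
    hLz.trans (norm_le_maxMod (p.continuous.comp hL) hz)
  have hup : maxMod (fun z => p.eval (L z)) r ≤ c₂ * M ^ p.natDegree :=
    calc maxMod (fun z => p.eval (L z)) r ≤ maxMod (fun w => p.eval w) M :=
          maxMod_comp_le p.differentiable hL r
      _ = ‖p.eval w‖ := hwM.symm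
      _ ≤ c₂ * M ^ p.natDegree := hpw
  have hMd : 0 < M ^ p.natDegree := pow_pos hMpos _
  have hlog₁ := log_le_log (mul_pos hc₁ hMd) hlow
  have hlog₂ := log_le_log ((mul_pos hc₁ hMd).trans_le hlow) hup
  rw [log_mul hc₁.ne' hMd.ne', log_pow] at hlog₁
  rw [log_mul hc₂.ne' hMd.ne', log_pow] at hlog₂
  rw [abs_le]
  constructor <;> linarith [neg_abs_le (log c₁), le_abs_self (log c₂), abs_nonneg (log c₁),
    abs_nonneg (log c₂)]

theorem order_of_polynomial_linearizer_general (p : Polynomial ℂ) (d : ℕ) (hd : 2 ≤ d)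
    (hdeg : p.natDegree = d) (lam : ℂ) (hrep : 1 < ‖lam‖)
    (L : ℂ → ℂ) (hL : Differentiable ℂ L) (hL' : deriv L 0 ≠ 0)
    (hLeq : ∀ z : ℂ, p.eval (L z) = L (lam * z)) :
    Filter.limsup (fun r : ℝ => Real.log (Real.log (maxMod L r)) / Real.log r)
        Filter.atTop = Real.log d / Real.log ‖lam‖ := by
  subst hdeg
  have hp : p ≠ 0 := by rintro rfl; simp at hd
  have hlam : lam ≠ 0 := by rintro rfl; norm_num at hrep
  have hunb : ¬ IsBounded (range L) := fun hb => hL' <| by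
    rw [funext fun z => hL.apply_eq_apply_of_bounded hb z 0, deriv_const]
  have hM := tendsto_maxMod_atTop hL hunb
  obtain ⟨C, R, hC⟩ := exists_abs_log_maxMod_comp_sub_le hL.continuous hp
  obtain ⟨r₀, hr₀⟩ := eventually_atTop.1 (hM.eventually_ge_atTop (max R 1))
  have hMpos : ∀ r, max r₀ 1 ≤ r → 0 < maxMod L r := fun r hr =>
    one_pos.trans_le (le_of_max_le_right (hr₀ r (le_of_max_le_left hr)))
  have hrec : ∀ r, max r₀ 1 ≤ r →
      |log (maxMod L (‖lam‖ * r)) - p.natDegree * log (maxMod L r)| ≤ C := fun r hr => by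
    rw [← maxMod_comp_mul_left hlam, ← funext hLeq]
    exact hC r (zero_le_one.trans (le_of_max_le_right hr))
      (le_of_max_le_left (hr₀ r (le_of_max_le_left hr)))
  refine (tendsto_log_div_log_of_abs_sub_mul_le hrep (by exact_mod_cast hd) (by positivity)
    (fun r hr s _ hrs => log_le_log (hMpos r hr) (maxMod_monotone hL hrs))
    (tendsto_log_atTop.comp hM) hrec).limsup_eq

theorem order_of_polynomial_linearizer (p : Polynomial ℂ) (d : ℕ) (hd : 2 ≤ d)
    (hdeg : p.natDegree = d) (z₀ lam : ℂ) (hfix : p.eval z₀ = z₀)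
    (hlam : lam = (Polynomial.derivative p).eval z₀) (hrep : 1 < ‖lam‖)
    (L : ℂ → ℂ) (hL : Differentiable ℂ L) (hL0 : L 0 = z₀) (hL' : deriv L 0 ≠ 0)
    (hLeq : ∀ z : ℂ, p.eval (L z) = L (lam * z)) :
    Filter.limsup (fun r : ℝ => Real.log (Real.log (maxMod L r)) / Real.log r)
        Filter.atTop = Real.log d / Real.log ‖lam‖ :=
  order_of_polynomial_linearizer_general p d hd hdeg lam hrep L hL hL' hLeq
end
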